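/- (Partitioned fundamental lemma) Let (A, B, C, D) be a discrete-time LTI system with state dimension n and controllable pair (A, B). Let (u^d, y^d) be a length-T input/output trajectory with u^d persistently exciting of order T_ini + N + n. Partition the Hankel matrices as col(U_p, U_f) = H_{T_ini+N}(u^d) and col(Y_p, Y_f) = H_{T_ini+N}(y^d), where U_p consists of the first m·T_ini rows and U_f of the last m·N rows (and analogously Y_p, Y_f with m replaced by p). Then for sequences u_ini ∈ (R^m)^{T_ini}, u ∈ (R^m)^N, y_ini ∈ (R^p)^{T_ini}, y ∈ (R^p)^N, the concatenation col(u_ini, u, y_ini, y) forms a length-(T_ini + N) input/output trajectory of the system (input sequence u_ini followed by u, output sequence y_ini followed by y) if and only if there exists g ∈ R^{T−T_ini−N+1} with U_p g = u_ini, Y_p g = y_ini, U_f g = u, Y_f g = y. -/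

import Mathlib

open Matrix

noncomputable section

/-- `(u, y)` is a length-`L` input/output trajectory of the discrete-time LTI system
`(A, B, C, D)`: there is a state sequence `x` with `x(k+1) = A x(k) + B u(k)` and
`y(k) = C x(k) + D u(k)` for `k = 0, …, L-1`. -/
def IsTrajectory {n m p : ℕ} (A : Matrix (Fin n) (Fin n) ℝ) (B : Matrix (Fin n) (Fin m) ℝ)
    (C : Matrix (Fin p) (Fin n) ℝ) (D : Matrix (Fin p) (Fin m) ℝ) {L : ℕ}
    (u : Fin L → Fin m → ℝ) (y : Fin L → Fin p → ℝ) : Prop :=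
  ∃ x : Fin (L + 1) → Fin n → ℝ, ∀ k : Fin L,
    x k.succ = A.mulVec (x k.castSucc) + B.mulVec (u k) ∧
    y k = C.mulVec (x k.castSucc) + D.mulVec (u k)

/-- The block Hankel matrix `H_l(ω) ∈ ℝ^{ql × (T-l+1)}` of depth `l` of a length-`T`
sequence `ω` with values in `ℝ^q`; rows are indexed by `Fin l × Fin q`, and the
`(i, j)` block entry is `ω (i + j)` (0-indexed). -/
def hankel {q T : ℕ} (l : ℕ) (hl : l ≤ T) (ω : Fin T → Fin q → ℝ) :
    Matrix (Fin l × Fin q) (Fin (T - l + 1)) ℝ :=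
  Matrix.of fun iq j =>
    ω ⟨(iq.1 : ℕ) + (j : ℕ), by have := iq.1.isLt; have := j.isLt; omega⟩ iq.2

/-- The controllability matrix `[B, AB, …, A^{n-1}B]`. -/
def ctrbMat {n : ℕ} {q : Type*} [Fintype q] (A : Matrix (Fin n) (Fin n) ℝ)
    (B : Matrix (Fin n) q ℝ) : Matrix (Fin n) (Fin n × q) ℝ :=
  Matrix.of fun r kj => (A ^ (kj.1 : ℕ) * B) r kj.2

/-- The order-`l` observability matrix `col(C, CA, …, CA^{l-1})`. -/
def obsvMat {n p : ℕ} (l : ℕ) (A : Matrix (Fin n) (Fin n) ℝ)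
    (C : Matrix (Fin p) (Fin n) ℝ) : Matrix (Fin l × Fin p) (Fin n) ℝ :=
  Matrix.of fun kr c => (C * A ^ (kr.1 : ℕ)) kr.2 c

/-- Concatenation of a length-`Ti` sequence followed by a length-`N` sequence. -/
def catSeq {α : Type*} {Ti N : ℕ} (a : Fin Ti → α) (b : Fin N → α) : Fin (Ti + N) → α :=
  fun k => if h : (k : ℕ) < Ti then a ⟨k, h⟩ else b ⟨(k : ℕ) - Ti, by have := k.isLt; omega⟩

end

/-!
Willems' fundamental lemma in its left-kernel form: if `x` is the state sequence of the data,
the stacked matrix `col(H_L(u^d), X)`, `X = [x_0 ⋯ x_{J-1}]`, has full row rank. Let `(η, ξ)`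
annihilate it. Prepending the row vectors `ξ A^{n-1} B, …, ξ B` to `η` and shifting, each shift
pairs a window of `u^d` of length `L + n` with `-(ξ A^τ) x_j`; combining the shifts with the
coefficients of the characteristic polynomial of `A` kills the state term (Cayley–Hamilton),
so by persistency of excitation the combination vanishes. It is triangular with leading
coefficient `1`, hence `η = 0` and `ξ A^k B = 0` for `k < n`, and controllability gives `ξ = 0`.

So every pair (input, initial state) is `(H_L(u^d) g, X g)` for some `g`. Since
`(H_L(u^d) g, H_L(y^d) g)` is a trajectory with initial state `X g`, and a trajectory is
determined by its input and initial state, the length-`L` trajectories are exactly these pairs.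
-/

open Finset

namespace Matrix

variable {ι κ K : Type*} [Fintype ι] [Fintype κ] [Field K]

theorem linearIndependent_row_of_rank_eq_card {M : Matrix ι κ K}
    (h : M.rank = Fintype.card ι) : LinearIndependent K M.row := by
  rw [linearIndependent_iff_card_eq_finrank_span, Set.finrank, ← rank_eq_finrank_span_row, h]

theorem vecMul_injective_of_rank_eq_card {M : Matrix ι κ K}
    (h : M.rank = Fintype.card ι) : Function.Injective M.vecMul :=
  vecMul_injective_iff.mpr (linearIndependent_row_of_rank_eq_card h)

theorem mulVec_surjective_of_vecMul_injective {M : Matrix ι κ K}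
    (h : Function.Injective M.vecMul) : Function.Surjective M.mulVec := by
  have hrange : LinearMap.range M.mulVecLin = ⊤ :=
    Submodule.eq_top_of_finrank_eq <| by
      rw [Module.finrank_fintype_fun_eq_card]
      exact (vecMul_injective_iff.mp h).rank_matrix
  exact fun w => LinearMap.range_eq_top.mp hrange w

theorem sum_charpoly_coeff_smul_pow_eq_zero {n : ℕ} (A : Matrix (Fin n) (Fin n) K) :
    ∑ τ ∈ range (n + 1), A.charpoly.coeff τ • A ^ τ = 0 := by
  simpa [Polynomial.aeval_eq_sum_range] using A.aeval_self_charpoly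

theorem charpoly_coeff_dim_eq_one {n : ℕ} (A : Matrix (Fin n) (Fin n) K) :
    A.charpoly.coeff n = 1 := by
  simpa using A.charpoly_monic.coeff_natDegree

end Matrix

theorem Nat.decreasing_strong_induction {P : ℕ → Prop} {N : ℕ} (hN : ∀ i, N ≤ i → P i)
    (hstep : ∀ s < N, (∀ t, s < t → P t) → P s) (i : ℕ) : P i := by
  suffices ∀ d i, N ≤ i + d → P i from this N i (by omega)
  intro d
  induction d with
  | zero => exact fun i hi => hN i hi
  | succ d ih =>
    intro i hi
    by_cases hiN : N ≤ i
    · exact hN i hiN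
    · exact hstep i (by omega) fun t ht => ih t (by omega)

open Matrix

-- Indexing the data by `ℕ` instead of `Fin T` makes the number of columns independent of the data
-- length and keeps bound proofs out of the window arithmetic.
def seqHankel {α q : Type*} (l J : ℕ) (w : ℕ → q → α) : Matrix (Fin l × q) (Fin J) α :=
  Matrix.of fun p j => w (p.1 + j) p.2

theorem hankel_eq_seqHankel {q T l : ℕ} (hl : l ≤ T) {ω : Fin T → Fin q → ℝ}
    {w : ℕ → Fin q → ℝ} (hw : ∀ k (hk : k < T), w k = ω ⟨k, hk⟩) :
    hankel l hl ω = seqHankel l (T - l + 1) w := by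
  ext ⟨i, r⟩ j
  simp [hankel, seqHankel, hw (i + j) (by omega)]

theorem vecMul_seqHankel {R q : Type*} [CommSemiring R] [Fintype q] {l J : ℕ}
    (v w : ℕ → q → R) (j : Fin J) :
    ((fun p : Fin l × q => v p.1 p.2) ᵥ* seqHankel l J w) j = ∑ s ∈ range l, v s ⬝ᵥ w (j + s) := by
  simp only [vecMul, dotProduct, seqHankel, of_apply, Fintype.sum_prod_type]
  rw [← Fin.sum_univ_eq_sum_range (fun s => ∑ i, v s i * w (j + s) i)]
  simp only [add_comm]

theorem curry_seqHankel_mulVec {q : Type*} {l J : ℕ} (w : ℕ → q → ℝ) (g : Fin J → ℝ) :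
    Function.curry (seqHankel l J w *ᵥ g) = fun k : Fin l => ∑ j, g j • w (k + j) := by
  ext k i
  simp [seqHankel, mulVec, dotProduct, mul_comm]

theorem eq_zero_of_window_sum_eq_zero {m l K : ℕ} {u v : ℕ → Fin m → ℝ}
    (hPE : (seqHankel l K u).rank = m * l)
    (hv : ∀ j < K, ∑ s ∈ range l, v s ⬝ᵥ u (j + s) = 0) {s : ℕ} (hs : s < l) : v s = 0 := by
  have hinj := vecMul_injective_of_rank_eq_card (M := seqHankel l K u)
    (by rw [hPE]; simp [mul_comm])
  have hzero : (fun p : Fin l × Fin m => v p.1 p.2) = 0 :=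
    hinj <| funext fun j => by
      simp only [vecMul_seqHankel, zero_vecMul, Pi.zero_apply]; exact hv j j.isLt
  exact funext fun i => congrFun hzero (⟨s, hs⟩, i)

section StateRecursion

variable {n m : ℕ} {A : Matrix (Fin n) (Fin n) ℝ} {B : Matrix (Fin n) (Fin m) ℝ}
  {u : ℕ → Fin m → ℝ} {x : ℕ → Fin n → ℝ}

theorem state_add_eq_pow_mulVec_add_sum (hx : ∀ k, x (k + 1) = A *ᵥ x k + B *ᵥ u k) (j τ : ℕ) :
    x (j + τ) = A ^ τ *ᵥ x j + ∑ s ∈ range τ, (A ^ (τ - 1 - s) * B) *ᵥ u (j + s) := by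
  induction τ with
  | zero => simp
  | succ τ ih =>
    have hshift : ∀ s ∈ range τ,
        A *ᵥ ((A ^ (τ - 1 - s) * B) *ᵥ u (j + s)) = (A ^ (τ + 1 - 1 - s) * B) *ᵥ u (j + s) := by
      intro s hs
      rw [mulVec_mulVec, ← Matrix.mul_assoc, ← pow_succ',
        show τ - 1 - s + 1 = τ + 1 - 1 - s by have := mem_range.mp hs; omega]
    rw [← add_assoc, hx, ih, sum_range_succ, mulVec_add, mulVec_mulVec, ← pow_succ', mulVec_sum,
      sum_congr rfl hshift, show τ + 1 - 1 - τ = 0 by omega, pow_zero, Matrix.one_mul]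
    abel

def backwardExt (A : Matrix (Fin n) (Fin n) ℝ) (B : Matrix (Fin n) (Fin m) ℝ) (ξ : Fin n → ℝ)
    (η : ℕ → Fin m → ℝ) (i : ℕ) : Fin m → ℝ :=
  if i < n then ξ ᵥ* (A ^ (n - 1 - i) * B) else η (i - n)

theorem window_sum_backwardExt (hx : ∀ k, x (k + 1) = A *ᵥ x k + B *ᵥ u k)
    {L : ℕ} {ξ : Fin n → ℝ} {η : ℕ → Fin m → ℝ} (hη : ∀ s, L ≤ s → η s = 0) {τ j : ℕ}
    (hτ : τ ≤ n) (hann : ∑ s ∈ range L, η s ⬝ᵥ u (j + τ + s) + ξ ⬝ᵥ x (j + τ) = 0) :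
    ∑ s ∈ range (L + n), backwardExt A B ξ η (s + (n - τ)) ⬝ᵥ u (j + s) =
      -((ξ ᵥ* A ^ τ) ⬝ᵥ x j) := by
  have hpast : ∑ s ∈ range τ, backwardExt A B ξ η (s + (n - τ)) ⬝ᵥ u (j + s) =
      ξ ⬝ᵥ x (j + τ) - (ξ ᵥ* A ^ τ) ⬝ᵥ x j := by
    rw [state_add_eq_pow_mulVec_add_sum hx, dotProduct_add, dotProduct_sum, dotProduct_mulVec,
      add_sub_cancel_left]
    refine sum_congr rfl fun s hs => ?_
    have hs := mem_range.mp hs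
    rw [backwardExt, if_pos (by omega), show n - 1 - (s + (n - τ)) = τ - 1 - s by omega,
      dotProduct_mulVec]
  have hfuture : ∑ t ∈ range L, backwardExt A B ξ η (τ + t + (n - τ)) ⬝ᵥ u (j + (τ + t)) =
      -(ξ ⬝ᵥ x (j + τ)) := by
    rw [← eq_neg_of_add_eq_zero_left hann]
    refine sum_congr rfl fun t _ => ?_
    rw [backwardExt, if_neg (by omega), show τ + t + (n - τ) - n = t by omega, ← add_assoc]
  have hbeyond : ∑ t ∈ range (n - τ),
      backwardExt A B ξ η (τ + L + t + (n - τ)) ⬝ᵥ u (j + (τ + L + t)) = 0 :=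
    sum_eq_zero fun t _ => by
      rw [backwardExt, if_neg (by omega), hη _ (by omega), zero_dotProduct]
  rw [show L + n = τ + L + (n - τ) by omega, sum_range_add, sum_range_add, hpast, hfuture,
    hbeyond]
  ring

theorem eq_zero_of_window_sum_add_dotProduct_eq_zero {L K : ℕ}
    (hx : ∀ k, x (k + 1) = A *ᵥ x k + B *ᵥ u k)
    (hctrb : (ctrbMat A B).rank = n) (hPE : (seqHankel (L + n) K u).rank = m * (L + n))
    {η : ℕ → Fin m → ℝ} {ξ : Fin n → ℝ} (hη : ∀ s, L ≤ s → η s = 0)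
    (hann : ∀ j < K + n, ∑ s ∈ range L, η s ⬝ᵥ u (j + s) + ξ ⬝ᵥ x j = 0) :
    η = 0 ∧ ξ = 0 := by
  set w := backwardExt A B ξ η
  -- Cayley–Hamilton turns this combination of shifts of `w` into an annihilator of all windows
  -- of length `L + n`.
  have hcomb : ∀ s < L + n, ∑ τ ∈ range (n + 1), A.charpoly.coeff τ • w (s + (n - τ)) = 0 := by
    refine fun s hs => eq_zero_of_window_sum_eq_zero
      (v := fun s => ∑ τ ∈ range (n + 1), A.charpoly.coeff τ • w (s + (n - τ))) hPE
      (fun j hj => ?_) hs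
    calc ∑ s ∈ range (L + n),
          (∑ τ ∈ range (n + 1), A.charpoly.coeff τ • w (s + (n - τ))) ⬝ᵥ u (j + s)
        = ∑ τ ∈ range (n + 1),
            A.charpoly.coeff τ * ∑ s ∈ range (L + n), w (s + (n - τ)) ⬝ᵥ u (j + s) := by
          simp only [sum_dotProduct, smul_dotProduct, smul_eq_mul, mul_sum]
          exact sum_comm
      _ = ∑ τ ∈ range (n + 1), A.charpoly.coeff τ * -((ξ ᵥ* A ^ τ) ⬝ᵥ x j) := by
          refine sum_congr rfl fun τ hτ => ?_
          rw [window_sum_backwardExt hx hη (Nat.lt_succ_iff.mp (mem_range.mp hτ))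
            (hann (j + τ) (by have := Nat.lt_succ_iff.mp (mem_range.mp hτ); omega))]
      _ = -((ξ ᵥ* ∑ τ ∈ range (n + 1), A.charpoly.coeff τ • A ^ τ) ⬝ᵥ x j) := by
          simp only [vecMul_sum, vecMul_smul, sum_dotProduct, smul_dotProduct, smul_eq_mul,
            mul_neg, sum_neg_distrib]
      _ = 0 := by
          rw [A.sum_charpoly_coeff_smul_pow_eq_zero, vecMul_zero, zero_dotProduct, neg_zero]
  have hw : ∀ i, w i = 0 := by
    refine Nat.decreasing_strong_induction (N := L + n) (fun i hi => ?_) fun s hs hlater => ?_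
    · simp only [w, backwardExt, if_neg (show ¬ i < n by omega), hη _ (by omega : L ≤ i - n)]
    · have h := hcomb s hs
      rwa [sum_range_succ, sum_eq_zero fun τ hτ => by
          rw [hlater _ (by have := mem_range.mp hτ; omega), smul_zero],
        zero_add, Nat.sub_self, add_zero, A.charpoly_coeff_dim_eq_one, one_smul] at h
  constructor
  · funext t
    simpa [w, backwardExt] using hw (n + t)
  · have hξ : ξ ᵥ* ctrbMat A B = 0 := by
      funext ⟨k, i⟩
      have h := congrFun (hw (n - 1 - k)) i
      simp only [w, backwardExt, if_pos (show n - 1 - k < n by omega),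
        show n - 1 - (n - 1 - k) = (k : ℕ) by omega] at h
      exact h
    exact vecMul_injective_of_rank_eq_card (by simpa using hctrb)
      (hξ.trans (zero_vecMul _).symm)

theorem vecMul_injective_fromRows_seqHankel {L K J : ℕ}
    (hx : ∀ k, x (k + 1) = A *ᵥ x k + B *ᵥ u k) (hctrb : (ctrbMat A B).rank = n)
    (hPE : (seqHankel (L + n) K u).rank = m * (L + n)) (hKJ : K + n ≤ J) :
    Function.Injective
      (fromRows (seqHankel L J u) (Matrix.of fun r (j : Fin J) => x j r)).vecMul := by
  rw [← coe_vecMulLinear, injective_iff_map_eq_zero]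
  intro v hv
  set η : ℕ → Fin m → ℝ := fun s => if h : s < L then fun i => v (.inl (⟨s, h⟩, i)) else 0
  have hvη : v ∘ Sum.inl = fun p : Fin L × Fin m => η p.1 p.2 := by
    funext p
    simp [η, p.1.isLt]
  simp only [coe_vecMulLinear, vecMul_fromRows, hvη] at hv
  obtain ⟨hη, hξ⟩ := eq_zero_of_window_sum_add_dotProduct_eq_zero hx hctrb hPE
    (η := η) (ξ := v ∘ Sum.inr) (fun s hs => dif_neg (by omega)) fun j hj => by
      have h := congrFun hv ⟨j, by omega⟩
      rw [Pi.add_apply, vecMul_seqHankel] at h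
      exact h
  funext p
  rcases p with ⟨s, i⟩ | r
  · simpa [η, s.isLt] using congrFun (congrFun hη s) i
  · exact congrFun hξ r

end StateRecursion

section StateSequence

variable {n m p : ℕ} {A : Matrix (Fin n) (Fin n) ℝ} {B : Matrix (Fin n) (Fin m) ℝ}
  {C : Matrix (Fin p) (Fin n) ℝ} {D : Matrix (Fin p) (Fin m) ℝ}
  {u : ℕ → Fin m → ℝ} {x : ℕ → Fin n → ℝ}

def IsStateSequence (A : Matrix (Fin n) (Fin n) ℝ) (B : Matrix (Fin n) (Fin m) ℝ)
    (C : Matrix (Fin p) (Fin n) ℝ) (D : Matrix (Fin p) (Fin m) ℝ) {L : ℕ}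
    (u : Fin L → Fin m → ℝ) (y : Fin L → Fin p → ℝ) (x : Fin (L + 1) → Fin n → ℝ) : Prop :=
  ∀ k : Fin L, x k.succ = A *ᵥ x k.castSucc + B *ᵥ u k ∧ y k = C *ᵥ x k.castSucc + D *ᵥ u k

theorem isTrajectory_iff_exists_isStateSequence {L : ℕ} {u : Fin L → Fin m → ℝ}
    {y : Fin L → Fin p → ℝ} :
    IsTrajectory A B C D u y ↔ ∃ x, IsStateSequence A B C D u y x :=
  Iff.rfl

theorem IsStateSequence.output_eq {L : ℕ} {u : Fin L → Fin m → ℝ} {y y' : Fin L → Fin p → ℝ}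
    {x x' : Fin (L + 1) → Fin n → ℝ} (h : IsStateSequence A B C D u y x)
    (h' : IsStateSequence A B C D u y' x') (h0 : x 0 = x' 0) : y = y' := by
  have hxx' : x = x' :=
    funext fun k => Fin.induction h0 (fun k ih => by rw [(h k).1, (h' k).1, ih]) k
  funext k
  rw [(h k).2, (h' k).2, hxx']

theorem isStateSequence_seqHankel_mulVec (hx : ∀ k, x (k + 1) = A *ᵥ x k + B *ᵥ u k) (L : ℕ)
    {J : ℕ} (g : Fin J → ℝ) :
    IsStateSequence A B C D (Function.curry (seqHankel L J u *ᵥ g))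
      (Function.curry (seqHankel L J (fun k => C *ᵥ x k + D *ᵥ u k) *ᵥ g))
      (fun k => ∑ j, g j • x (k + j)) := by
  intro k
  rw [curry_seqHankel_mulVec, curry_seqHankel_mulVec]
  constructor <;>
    simp [Fin.val_succ, add_right_comm _ 1, hx, mulVec_sum, mulVec_smul,
      sum_add_distrib, smul_add]

theorem isTrajectory_iff_exists_seqHankel_mulVec {L K J : ℕ}
    (hx : ∀ k, x (k + 1) = A *ᵥ x k + B *ᵥ u k)
    (hctrb : (ctrbMat A B).rank = n) (hPE : (seqHankel (L + n) K u).rank = m * (L + n))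
    (hKJ : K + n ≤ J) (wu : Fin L → Fin m → ℝ) (wy : Fin L → Fin p → ℝ) :
    IsTrajectory A B C D wu wy ↔ ∃ g : Fin J → ℝ,
      Function.curry (seqHankel L J u *ᵥ g) = wu ∧
        Function.curry (seqHankel L J (fun k => C *ᵥ x k + D *ᵥ u k) *ᵥ g) = wy := by
  rw [isTrajectory_iff_exists_isStateSequence]
  constructor
  · rintro ⟨z, hz⟩
    obtain ⟨g, hg⟩ := mulVec_surjective_of_vecMul_injective
      (vecMul_injective_fromRows_seqHankel hx hctrb hPE hKJ)
      (Sum.elim (Function.uncurry wu) (z 0))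
    rw [fromRows_mulVec, Sum.elim_eq_iff] at hg
    have hu : Function.curry (seqHankel L J u *ᵥ g) = wu := by
      rw [hg.1, Function.curry_uncurry]
    have hz0 : ∑ j, g j • x (0 + j) = z 0 := by
      rw [← hg.2]
      ext r
      simp [mulVec, dotProduct, mul_comm]
    refine ⟨g, hu, ?_⟩
    have hcomb := isStateSequence_seqHankel_mulVec (C := C) (D := D) hx L g
    rw [hu] at hcomb
    exact hcomb.output_eq hz hz0
  · rintro ⟨g, rfl, rfl⟩
    exact ⟨_, isStateSequence_seqHankel_mulVec hx L g⟩

theorem IsTrajectory.exists_nat_extension {T : ℕ} {ud : Fin T → Fin m → ℝ}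
    {yd : Fin T → Fin p → ℝ} (h : IsTrajectory A B C D ud yd) :
    ∃ (u : ℕ → Fin m → ℝ) (x : ℕ → Fin n → ℝ), (∀ k, x (k + 1) = A *ᵥ x k + B *ᵥ u k) ∧
      ∀ k (hk : k < T), u k = ud ⟨k, hk⟩ ∧ C *ᵥ x k + D *ᵥ u k = yd ⟨k, hk⟩ := by
  obtain ⟨xd, hxd⟩ := h
  let u : ℕ → Fin m → ℝ := fun k => if hk : k < T then ud ⟨k, hk⟩ else 0
  let x : ℕ → Fin n → ℝ := fun k => Nat.rec (xd 0) (fun k xk => A *ᵥ xk + B *ᵥ u k) k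
  have hu : ∀ k (hk : k < T), u k = ud ⟨k, hk⟩ := fun k hk => dif_pos hk
  have hx : ∀ k (hk : k ≤ T), x k = xd ⟨k, by omega⟩ := by
    intro k
    induction k with
    | zero => exact fun _ => rfl
    | succ k ih =>
      intro hk
      rw [show xd ⟨k + 1, _⟩ = xd (Fin.succ ⟨k, hk⟩) from rfl, (hxd ⟨k, hk⟩).1]
      change A *ᵥ x k + B *ᵥ u k = _
      rw [ih (by omega), hu k hk]
      rfl
  refine ⟨u, x, fun k => rfl, fun k hk => ⟨hu k hk, ?_⟩⟩
  rw [(hxd ⟨k, hk⟩).2, hx k hk.le, hu k hk]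
  rfl

end StateSequence

theorem catSeq_eq_iff {α : Type*} {Ti N : ℕ} {f : Fin (Ti + N) → α} {a : Fin Ti → α}
    {b : Fin N → α} :
    f = catSeq a b ↔ (∀ k, f (Fin.castAdd N k) = a k) ∧ ∀ k, f (Fin.natAdd Ti k) = b k := by
  constructor
  · rintro rfl
    simp [catSeq]
  · rintro ⟨ha, hb⟩
    funext k
    rw [catSeq]
    split_ifs with hk
    · exact ha ⟨k, hk⟩
    · rw [← hb]
      congr
      ext
      simp
      omega

/-- **partitioned fundamental lemma.** Partition the depth-`(T_ini+N)`
Hankel matrices of `(u^d, y^d)` into past blocks (`U_p`, `Y_p`: first `T_ini` block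
rows) and future blocks (`U_f`, `Y_f`: last `N` block rows).  Under controllability
of `(A,B)` and persistency of excitation of `u^d` of order `T_ini + N + n`, the
concatenation `col(u_ini, u, y_ini, y)` is a length-`(T_ini+N)` trajectory of the
system iff there is `g` with `U_p g = u_ini`, `Y_p g = y_ini`, `U_f g = u`, `Y_f g = y`. -/
theorem partitioned_fundamental_lemma
    (n m p T Tini N : ℕ) (hT : Tini + N ≤ T) (hTpe : Tini + N + n ≤ T)
    (A : Matrix (Fin n) (Fin n) ℝ) (B : Matrix (Fin n) (Fin m) ℝ)
    (C : Matrix (Fin p) (Fin n) ℝ) (D : Matrix (Fin p) (Fin m) ℝ)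
    (hctrb : (ctrbMat A B).rank = n)
    (ud : Fin T → Fin m → ℝ) (yd : Fin T → Fin p → ℝ)
    (htraj : IsTrajectory A B C D ud yd)
    (hPE : (hankel (Tini + N + n) hTpe ud).rank = m * (Tini + N + n))
    (uini : Fin Tini → Fin m → ℝ) (u : Fin N → Fin m → ℝ)
    (yini : Fin Tini → Fin p → ℝ) (y : Fin N → Fin p → ℝ) :
    IsTrajectory A B C D (catSeq uini u) (catSeq yini y) ↔
      ∃ g : Fin (T - (Tini + N) + 1) → ℝ,
        (∀ (k : Fin Tini) (i : Fin m),
          (hankel (Tini + N) hT ud).mulVec g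
            (⟨(k : ℕ), by have := k.isLt; omega⟩, i) = uini k i) ∧
        (∀ (k : Fin Tini) (i : Fin p),
          (hankel (Tini + N) hT yd).mulVec g
            (⟨(k : ℕ), by have := k.isLt; omega⟩, i) = yini k i) ∧
        (∀ (k : Fin N) (i : Fin m),
          (hankel (Tini + N) hT ud).mulVec g
            (⟨Tini + (k : ℕ), by have := k.isLt; omega⟩, i) = u k i) ∧
        (∀ (k : Fin N) (i : Fin p),
          (hankel (Tini + N) hT yd).mulVec g
            (⟨Tini + (k : ℕ), by have := k.isLt; omega⟩, i) = y k i) := by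
  obtain ⟨U, X, hX, hdata⟩ := htraj.exists_nat_extension
  have hKJ : T - (Tini + N + n) + 1 + n ≤ T - (Tini + N) + 1 := by omega
  rw [hankel_eq_seqHankel hTpe fun k hk => (hdata k hk).1] at hPE
  rw [hankel_eq_seqHankel hT fun k hk => (hdata k hk).1,
    hankel_eq_seqHankel hT fun k hk => (hdata k hk).2,
    isTrajectory_iff_exists_seqHankel_mulVec hX hctrb hPE hKJ]
  refine exists_congr fun g => ?_
  rw [catSeq_eq_iff, catSeq_eq_iff]
  simp only [funext_iff, Function.curry_apply]
  rw [and_and_and_comm, and_assoc]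
  exact Iff.rfl
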